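/- Let ℓ ≥ 2, n ≥ 1, and let H be a finite connected graph of diameter at least ℓ. If Kₙ □ H is ℓ-distance-balanced, then H is ℓ-distance-balanced. -/

import Mathlib

open SimpleGraph

/-- The set of vertices of `G` strictly closer to `u` than to `v`. -/
def closerSet {V : Type*} (G : SimpleGraph V) (u v : V) : Set V :=
  {x | G.dist x u < G.dist x v}

/-- `G` is `ℓ`-distance-balanced: for every pair of vertices at distance `ℓ`, the number of
vertices strictly closer to the first equals the number strictly closer to the second. -/
def IsDistBalanced {V : Type*} (G : SimpleGraph V) (ℓ : ℕ) : Prop :=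
  ∀ u v : V, G.dist u v = ℓ → (closerSet G u v).ncard = (closerSet G v u).ncard

/-!
In `G □ H` with `G`, `H` connected, distances add over the two factors. Hence for two vertices
`(g, u)`, `(g, v)` in the same `H`-layer the `G`-coordinate contributes the same summand to both
distances, so the vertices closer to `(g, u)` are exactly `G × closerSet H u v`. Counting gives
`|G| · |closerSet H u v| = |G| · |closerSet H v u|`, and `|G| ≠ 0`.
-/

section BoxProd

variable {α β : Type*} {G : SimpleGraph α} {H : SimpleGraph β}

lemma dist_boxProd_of_reachable {x y : α × β} (hG : G.Reachable x.1 y.1)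
    (hH : H.Reachable x.2 y.2) :
    (G □ H).dist x y = G.dist x.1 y.1 + H.dist x.2 y.2 := by
  have hGH : (G □ H).Reachable x y := reachable_boxProd.mpr ⟨hG, hH⟩
  have := edist_boxProd (G := G) (H := H) x y
  rw [← hGH.coe_dist_eq_edist, ← hG.coe_dist_eq_edist, ← hH.coe_dist_eq_edist] at this
  exact_mod_cast this

lemma closerSet_boxProd_of_connected (hG : G.Connected) (hH : H.Connected) (g : α) (u v : β) :
    closerSet (G □ H) (g, u) (g, v) = Set.univ ×ˢ closerSet H u v := by
  ext ⟨a, x⟩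
  simp only [closerSet, Set.mem_ofPred_eq, Set.mem_prod, Set.mem_univ, true_and,
    dist_boxProd_of_reachable (hG.preconnected _ _) (hH.preconnected _ _)]
  omega

theorem IsDistBalanced.of_boxProd [Finite α] (hG : G.Connected) (hH : H.Connected) {ℓ : ℕ}
    (h : IsDistBalanced (G □ H) ℓ) : IsDistBalanced H ℓ := by
  intro u v huv
  obtain ⟨g⟩ := hG.nonempty
  have hdist : (G □ H).dist (g, u) (g, v) = ℓ := by
    rw [dist_boxProd_of_reachable (hG.preconnected _ _) (hH.preconnected _ _)]
    simp [huv]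
  have hcount := h _ _ hdist
  rw [closerSet_boxProd_of_connected hG hH, closerSet_boxProd_of_connected hG hH,
    Set.ncard_prod, Set.ncard_prod] at hcount
  have : Nonempty α := ⟨g⟩
  exact Nat.eq_of_mul_eq_mul_left (by rw [Set.ncard_univ]; exact Nat.card_pos) hcount

end BoxProd

theorem stmt11_general {β : Type*} (H : SimpleGraph β) (hH : H.Connected)
    (n ℓ : ℕ) (hn : 1 ≤ n)
    (hdb : IsDistBalanced ((⊤ : SimpleGraph (Fin n)) □ H) ℓ) :
    IsDistBalanced H ℓ :=
  have : Nonempty (Fin n) := ⟨⟨0, hn⟩⟩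
  hdb.of_boxProd connected_top hH

theorem stmt11 {β : Type*} [Fintype β] (H : SimpleGraph β) (hH : H.Connected)
    (n ℓ : ℕ) (hn : 1 ≤ n) (hℓ : 2 ≤ ℓ) (hdiam : ℓ ≤ H.diam)
    (hdb : IsDistBalanced ((⊤ : SimpleGraph (Fin n)) □ H) ℓ) :
    IsDistBalanced H ℓ :=
  stmt11_general H hH n ℓ hn hdb
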